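/- arXiv:1809.08824 — 3 statements merged into one kernel-verified Lean document; each statement's English description precedes it below -/
import Mathlib

section
/- Let γ ∈ ℂ and let ζ ∈ ℂ be a square root of γ (ζ² = γ). Let p₂ ∈ ℂ with p₂ ≠ 0, set D := (1 + γ)(1 − p₂²) + 2ζ(1 + p₂²) and assume D ≠ 0. Then complex numbers R, T, T_M, R_M satisfy the four interface equations (i) T_M + R_M = 1 + R, (ii) T = p₂·T_M + p₂⁻¹·R_M, (iii) ζ·(T_M − R_M) = 1 − R, (iv) T = ζ·(p₂·T_M − p₂⁻¹·R_M), if and only if R = (1 − γ)(1 − p₂²)/D, T_M = 2(1 + ζ)/D, R_M = −2p₂²(1 − ζ)/D, and T = 4p₂·ζ/D. -/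
/-! After multiplying (ii) and (iv) by `p₂`, the interface conditions form a linear system
in `(R, T, T_M, R_M)`. Explicit linear combinations of its equations isolate `D · T_M`,
`D · R_M`, `D · R` and `p₂ D · T`, where `D = (1 + ζ)² - p₂²(1 - ζ)²`; dividing by `D` (and
cancelling `p₂`) gives the formulas, and conversely they satisfy the system by computation. -/

section SlabInterface

variable {K : Type*} [Field K] {ζ p R T TM RM D : K}

theorem slab_amplitudes_mul_det (hp : p ≠ 0)
    (hD : D = (1 + ζ ^ 2) * (1 - p ^ 2) + 2 * ζ * (1 + p ^ 2))
    (h₁ : TM + RM = 1 + R) (h₂ : T = p * TM + p⁻¹ * RM)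
    (h₃ : ζ * (TM - RM) = 1 - R) (h₄ : T = ζ * (p * TM - p⁻¹ * RM)) :
    R * D = (1 - ζ ^ 2) * (1 - p ^ 2) ∧
    TM * D = 2 * (1 + ζ) ∧
    RM * D = -(2 * p ^ 2 * (1 - ζ)) ∧
    T * D = 4 * p * ζ := by
  have h₂' : T * p = p ^ 2 * TM + RM := by
    rw [h₂]; field_simp
  have h₄' : T * p = ζ * (p ^ 2 * TM - RM) := by
    rw [h₄]; field_simp
  have hTM : TM * D = 2 * (1 + ζ) := by
    linear_combination (1 + ζ) * h₁ + (1 + ζ) * h₃ + (1 - ζ) * h₂' - (1 - ζ) * h₄' + TM * hD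
  have hRM : RM * D = -(2 * p ^ 2 * (1 - ζ)) := by
    linear_combination (1 + ζ) * h₄' - (1 + ζ) * h₂' - (1 - ζ) * p ^ 2 * h₁
      - (1 - ζ) * p ^ 2 * h₃ + RM * hD
  refine ⟨?_, hTM, hRM, mul_right_cancel₀ hp ?_⟩
  · linear_combination hTM + hRM - D * h₁ - hD
  · linear_combination D * h₂' + p ^ 2 * hTM + hRM

theorem interface_eqs_of_slab_amplitudes
    (hD : D = (1 + ζ ^ 2) * (1 - p ^ 2) + 2 * ζ * (1 + p ^ 2)) (hD0 : D ≠ 0)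
    (hR : R = (1 - ζ ^ 2) * (1 - p ^ 2) / D) (hTM : TM = 2 * (1 + ζ) / D)
    (hRM : RM = -(2 * p ^ 2 * (1 - ζ)) / D) (hT : T = 4 * p * ζ / D) :
    TM + RM = 1 + R ∧ T = p * TM + p⁻¹ * RM ∧
    ζ * (TM - RM) = 1 - R ∧ T = ζ * (p * TM - p⁻¹ * RM) := by
  subst hR hTM hRM hT
  refine ⟨?_, ?_, ?_, ?_⟩ <;> field_simp <;> subst hD <;> ring

end SlabInterface

/-- Transmission and reflection coefficients for the rotated metal cylinder Σ₂
(perfect conductor case): the four interface equations determine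
`R`, `T`, `T_M`, `R_M` uniquely, with the closed formulas given. -/
theorem stmt1 (γ ζ p₂ R T TM RM : ℂ)
    (hζ : ζ ^ 2 = γ) (hp : p₂ ≠ 0) (D : ℂ)
    (hD : D = (1 + γ) * (1 - p₂ ^ 2) + 2 * ζ * (1 + p₂ ^ 2))
    (hD0 : D ≠ 0) :
    (TM + RM = 1 + R ∧
     T = p₂ * TM + p₂⁻¹ * RM ∧
     ζ * (TM - RM) = 1 - R ∧
     T = ζ * (p₂ * TM - p₂⁻¹ * RM)) ↔
    (R = (1 - γ) * (1 - p₂ ^ 2) / D ∧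
     TM = 2 * (1 + ζ) / D ∧
     RM = -(2 * p₂ ^ 2 * (1 - ζ)) / D ∧
     T = 4 * p₂ * ζ / D) := by
  subst hζ
  constructor
  · rintro ⟨h₁, h₂, h₃, h₄⟩
    obtain ⟨hR, hTM, hRM, hT⟩ := slab_amplitudes_mul_det hp hD h₁ h₂ h₃ h₄
    exact ⟨(eq_div_iff hD0).2 hR, (eq_div_iff hD0).2 hTM,
      (eq_div_iff hD0).2 hRM, (eq_div_iff hD0).2 hT⟩
  · rintro ⟨hR, hTM, hRM, hT⟩
    exact interface_eqs_of_slab_amplitudes hD hD0 hR hTM hRM hT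
end

section
/- Let α > 0 be a real number, let p₀ ∈ ℂ with p₀ ≠ 0, set D := (1 + α²)(1 − p₀²) + 2α(1 + p₀²) and assume D ≠ 0. Then complex numbers R, T, T_M, R_M satisfy the four interface equations (i) T_M + R_M = 1 + R, (ii) T = p₀·T_M + p₀⁻¹·R_M, (iii) α⁻¹·(T_M − R_M) = 1 − R, (iv) T = α⁻¹·(p₀·T_M − p₀⁻¹·R_M), if and only if R = (α² − 1)(1 − p₀²)/D, T_M = 2α(α + 1)/D, R_M = −2α·p₀²·(α − 1)/D, and T = 4p₀·α/D. -/
/-!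
Adding and subtracting the two equations at each interface expresses `2 TM` and `2 RM` through `R`
(at `x₁ = 0`) and through `T` (at `x₁ = -L`). Eliminating `TM` and `RM` leaves a 2 × 2 linear
system for `R` and `T` whose determinant is `D = (1 + α)² - p₀² (1 - α)²`, and Cramer's rule gives
the closed formulas.
-/

section SlabInterface

variable {K : Type*} [Field K] [NeZero (2 : K)] {a p D R T TM RM : K}

theorem front_interface_iff (ha : a ≠ 0) :
    (TM + RM = 1 + R ∧ a⁻¹ * (TM - RM) = 1 - R) ↔
      (2 * TM = (1 + a) + (1 - a) * R ∧ 2 * RM = (1 - a) + (1 + a) * R) := by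
  rw [inv_mul_eq_iff_eq_mul₀ ha]
  constructor
  · rintro ⟨h1, h3⟩
    exact ⟨by linear_combination h1 + h3, by linear_combination h1 - h3⟩
  · rintro ⟨h1, h3⟩
    constructor
    · apply mul_left_cancel₀ two_ne_zero; linear_combination h1 + h3
    · apply mul_left_cancel₀ two_ne_zero; linear_combination h1 - h3

theorem back_interface_iff (ha : a ≠ 0) (hp : p ≠ 0) :
    (T = p * TM + p⁻¹ * RM ∧ T = a⁻¹ * (p * TM - p⁻¹ * RM)) ↔
      (2 * p * TM = (1 + a) * T ∧ 2 * RM = p * (1 - a) * T) := by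
  have hpp : p * p⁻¹ = 1 := mul_inv_cancel₀ hp
  rw [eq_inv_mul_iff_mul_eq₀ ha]
  constructor
  · rintro ⟨h2, h4⟩
    exact ⟨by linear_combination -h2 - h4, by linear_combination -p * (h2 - h4) - 2 * RM * hpp⟩
  · rintro ⟨h2, h4⟩
    constructor
    · apply mul_left_cancel₀ two_ne_zero
      linear_combination -h2 - p⁻¹ * h4 - (1 - a) * T * hpp
    · apply mul_left_cancel₀ two_ne_zero
      linear_combination -h2 + p⁻¹ * h4 + (1 - a) * T * hpp

theorem slab_amplitudes_iff (hD : D = (1 + a) ^ 2 - p ^ 2 * (1 - a) ^ 2) (hD0 : D ≠ 0) :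
    ((2 * TM = (1 + a) + (1 - a) * R ∧ 2 * RM = (1 - a) + (1 + a) * R) ∧
        (2 * p * TM = (1 + a) * T ∧ 2 * RM = p * (1 - a) * T)) ↔
      (R = (a ^ 2 - 1) * (1 - p ^ 2) / D ∧ TM = 2 * a * (a + 1) / D ∧
        RM = -(2 * a * p ^ 2 * (a - 1)) / D ∧ T = 4 * p * a / D) := by
  simp only [eq_div_iff hD0]
  constructor
  · rintro ⟨⟨h1, h2⟩, h3, h4⟩
    have hR : R * D = (a ^ 2 - 1) * (1 - p ^ 2) := by
      linear_combination R * hD + p * (1 - a) * (p * h1 - h3) - (1 + a) * (h2 - h4)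
    refine ⟨hR, ?_, ?_, ?_⟩
    · apply mul_left_cancel₀ two_ne_zero
      linear_combination D * h1 + (1 - a) * hR + (1 + a) * hD
    · apply mul_left_cancel₀ two_ne_zero
      linear_combination D * h2 + (1 + a) * hR + (1 - a) * hD
    · linear_combination T * hD + (1 + a) * (p * h1 - h3) - p * (1 - a) * (h2 - h4)
  · rintro ⟨hR, hTM, hRM, hT⟩
    refine ⟨⟨?_, ?_⟩, ?_, ?_⟩ <;> apply mul_right_cancel₀ hD0
    · linear_combination 2 * hTM - (1 - a) * hR - (1 + a) * hD
    · linear_combination 2 * hRM - (1 + a) * hR - (1 - a) * hD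
    · linear_combination 2 * p * hTM - (1 + a) * hT
    · linear_combination 2 * hRM - p * (1 - a) * hT

end SlabInterface

/-- Transmission and reflection coefficients for the metal plate Σ₃
(perfect conductor case): the four interface equations determine
`R`, `T`, `T_M`, `R_M` uniquely, with the closed formulas given. -/
theorem stmt2 (α : ℝ) (hα : 0 < α) (p₀ R T TM RM : ℂ)
    (hp : p₀ ≠ 0) (D : ℂ)
    (hD : D = (1 + (α : ℂ) ^ 2) * (1 - p₀ ^ 2) + 2 * (α : ℂ) * (1 + p₀ ^ 2))
    (hD0 : D ≠ 0) :
    (TM + RM = 1 + R ∧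
     T = p₀ * TM + p₀⁻¹ * RM ∧
     ((α : ℂ))⁻¹ * (TM - RM) = 1 - R ∧
     T = ((α : ℂ))⁻¹ * (p₀ * TM - p₀⁻¹ * RM)) ↔
    (R = ((α : ℂ) ^ 2 - 1) * (1 - p₀ ^ 2) / D ∧
     TM = 2 * (α : ℂ) * ((α : ℂ) + 1) / D ∧
     RM = -(2 * (α : ℂ) * p₀ ^ 2 * ((α : ℂ) - 1)) / D ∧
     T = 4 * p₀ * (α : ℂ) / D) := by
  have ha : (α : ℂ) ≠ 0 := by exact_mod_cast hα.ne'
  have hD' : D = (1 + (α : ℂ)) ^ 2 - p₀ ^ 2 * (1 - (α : ℂ)) ^ 2 := by rw [hD]; ring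
  rw [← slab_amplitudes_iff hD' hD0, ← front_interface_iff ha, ← back_interface_iff ha hp]
  tauto
end

section
/- Let (Ω, μ) be a measure space with μ(Ω) < ∞, let α ∈ (0,1), let u_n, u ∈ L²(Ω, μ; ℂ), and let A_n ⊆ Ω be measurable sets. Assume: (a) u_n → u strongly in L²(Ω, μ; ℂ); (b) the indicator functions 1_{Ω∖A_n} converge weakly in L²(Ω, μ; ℝ) to the constant function α (i.e. ∫_Ω 1_{Ω∖A_n}·g dμ → α·∫_Ω g dμ for every g ∈ L²(Ω, μ; ℝ)); (c) ‖1_{A_n}·u_n‖_{L²} → 0. Then u = 0 μ-almost everywhere in Ω. -/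
open MeasureTheory Filter Topology
open scoped ENNReal

/-! Test the weak convergence of `1_{Ω ∖ A_n}` against `‖u‖ ∈ L²`. Since `u_n → u` and
`1_{A_n} u_n → 0` in `L²`, also `1_{A_n} u → 0` in `L²`, hence in `L¹` because `μ` is finite, so
`∫ 1_{Ω ∖ A_n} ‖u‖ → ∫ ‖u‖`. The weak limit is `α ∫ ‖u‖`, and `α ≠ 1` forces `∫ ‖u‖ = 0`. -/

section

variable {Ω E : Type*} [MeasurableSpace Ω] {μ : Measure Ω} [NormedAddCommGroup E]

theorem tendsto_eLpNorm_indicator_of_tendsto_eLpNorm_sub {p : ℝ≥0∞} (hp : 1 ≤ p)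
    {u : ℕ → Ω → E} {v : Ω → E} {A : ℕ → Set Ω}
    (hu : ∀ n, AEStronglyMeasurable (u n) μ) (hv : AEStronglyMeasurable v μ)
    (hA : ∀ n, MeasurableSet (A n))
    (h_sub : Tendsto (fun n => eLpNorm (u n - v) p μ) atTop (𝓝 0))
    (h_ind : Tendsto (fun n => eLpNorm ((A n).indicator (u n)) p μ) atTop (𝓝 0)) :
    Tendsto (fun n => eLpNorm ((A n).indicator v) p μ) atTop (𝓝 0) := by
  have h_le : ∀ n, eLpNorm ((A n).indicator v) p μ
      ≤ eLpNorm ((A n).indicator (u n)) p μ + eLpNorm (u n - v) p μ := fun n =>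
    calc eLpNorm ((A n).indicator v) p μ
        = eLpNorm ((A n).indicator (u n) - (A n).indicator (u n - v)) p μ := by
          simp [Set.indicator_sub']
      _ ≤ eLpNorm ((A n).indicator (u n)) p μ + eLpNorm ((A n).indicator (u n - v)) p μ :=
          eLpNorm_sub_le ((hu n).indicator (hA n)) (((hu n).sub hv).indicator (hA n)) hp
      _ ≤ _ := by gcongr; exact eLpNorm_indicator_le _
  exact tendsto_of_tendsto_of_tendsto_of_le_of_le tendsto_const_nhds
    (by simpa using h_ind.add h_sub) (fun n => zero_le) h_le

theorem tendsto_eLpNorm_zero_of_exponent_le [IsFiniteMeasure μ] {p q : ℝ≥0∞} (hpq : p ≤ q)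
    {f : ℕ → Ω → E} (hf : ∀ n, AEStronglyMeasurable (f n) μ)
    (h : Tendsto (fun n => eLpNorm (f n) q μ) atTop (𝓝 0)) :
    Tendsto (fun n => eLpNorm (f n) p μ) atTop (𝓝 0) := by
  obtain rfl | hp0 := eq_or_ne p 0
  · simp
  have h_exp : 0 ≤ 1 / p.toReal - 1 / q.toReal := by
    obtain rfl | hq := eq_or_ne q ∞
    · simp
    have hp : p ≠ ∞ := ne_top_of_le_ne_top hq hpq
    exact sub_nonneg.2 <| one_div_le_one_div_of_le (ENNReal.toReal_pos hp0 hp)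
      (ENNReal.toReal_mono hq hpq)
  have h_const : μ Set.univ ^ (1 / p.toReal - 1 / q.toReal) ≠ ∞ :=
    ENNReal.rpow_ne_top_of_nonneg h_exp (measure_ne_top μ _)
  exact tendsto_of_tendsto_of_tendsto_of_le_of_le tendsto_const_nhds
    (by simpa using ENNReal.Tendsto.mul_const h (Or.inr h_const))
    (fun n => zero_le) fun n => eLpNorm_le_eLpNorm_mul_rpow_measure_univ hpq (hf n)

theorem tendsto_integral_indicator_compl [NormedSpace ℝ E] {g : Ω → E} (hg : Integrable g μ)
    {A : ℕ → Set Ω} (hA : ∀ n, MeasurableSet (A n))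
    (h : Tendsto (fun n => eLpNorm ((A n).indicator g) 1 μ) atTop (𝓝 0)) :
    Tendsto (fun n => ∫ x, (A n)ᶜ.indicator g x ∂μ) atTop (𝓝 (∫ x, g x ∂μ)) := by
  refine tendsto_integral_of_L1' g hg.1 (Eventually.of_forall fun n => hg.indicator (hA n).compl) ?_
  simpa [Set.indicator_compl, eLpNorm_neg] using h

end

/-- Core of the lemma on trivial limits for parallel electric fields:
if `u_n → u` strongly in `L²`, the indicators of the complements
`Ω ∖ A_n` converge weakly in `L²` to the constant `α ∈ (0,1)`, and
`‖1_{A_n} u_n‖_{L²} → 0`, then `u = 0` almost everywhere. -/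
theorem stmt6 {Ω : Type*} [MeasurableSpace Ω] (μ : Measure Ω)
    [IsFiniteMeasure μ]
    (α : ℝ) (hα : α ∈ Set.Ioo (0 : ℝ) 1)
    (u : ℕ → Ω → ℂ) (ulim : Ω → ℂ)
    (hu : ∀ n, MemLp (u n) 2 μ) (hulim : MemLp ulim 2 μ)
    (A : ℕ → Set Ω) (hA : ∀ n, MeasurableSet (A n))
    (ha : Tendsto (fun n => eLpNorm (u n - ulim) 2 μ) atTop (𝓝 0))
    (hb : ∀ g : Ω → ℝ, MemLp g 2 μ →
      Tendsto
        (fun n => ∫ x, (Set.indicator (A n)ᶜ (fun _ => (1 : ℝ)) x) * g x ∂μ)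
        atTop (𝓝 (α * ∫ x, g x ∂μ)))
    (hc : Tendsto (fun n => eLpNorm (Set.indicator (A n) (u n)) 2 μ)
        atTop (𝓝 0)) :
    ulim =ᵐ[μ] 0 := by
  have h_small : Tendsto (fun n => eLpNorm ((A n).indicator fun x => ‖ulim x‖) 1 μ)
      atTop (𝓝 0) := by
    have h_norm : ∀ n, ((A n).indicator fun x => ‖ulim x‖) = fun x => ‖(A n).indicator ulim x‖ :=
      fun n => funext fun x => (norm_indicator_eq_indicator_norm ulim x).symm
    simp_rw [h_norm, eLpNorm_norm]
    exact tendsto_eLpNorm_zero_of_exponent_le one_le_two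
      (fun n => hulim.1.indicator (hA n)) <|
      tendsto_eLpNorm_indicator_of_tendsto_eLpNorm_sub one_le_two
        (fun n => (hu n).1) hulim.1 hA ha hc
  have h_strong := tendsto_integral_indicator_compl (hulim.integrable one_le_two).norm hA h_small
  have h_weak : Tendsto (fun n => ∫ x, (A n)ᶜ.indicator (fun x => ‖ulim x‖) x ∂μ) atTop
      (𝓝 (α * ∫ x, ‖ulim x‖ ∂μ)) := (hb _ hulim.norm).congr fun n => integral_congr_ae <|
    Eventually.of_forall fun x => by by_cases hx : x ∈ (A n)ᶜ <;> simp [hx]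
  have h_eq : ∫ x, ‖ulim x‖ ∂μ = α * ∫ x, ‖ulim x‖ ∂μ := tendsto_nhds_unique h_strong h_weak
  have h_zero : ∫ x, ‖ulim x‖ ∂μ = 0 :=
    (mul_eq_zero.1 (by linear_combination h_eq : (1 - α) * ∫ x, ‖ulim x‖ ∂μ = 0)).resolve_left
      (sub_ne_zero.2 hα.2.ne')
  filter_upwards [(integral_eq_zero_iff_of_nonneg (fun x => norm_nonneg (ulim x))
    (hulim.integrable one_le_two).norm).1 h_zero] with x hx
  simpa using hx
end
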